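/- Let Σ be a symmetric positive definite d×d matrix with spectral norm ‖Σ‖₂ ≤ D₀, and let β ∈ ℝ^d be supported on a set S with |S| ≤ s. If Σ satisfies the restricted eigenvalue property with constants (s,η), then ‖β‖₁ ≤ (√(D₀ s)/η)·√(βᵀΣβ); equivalently, with Δ_μ = Σβ, ‖β‖₁ ≤ (√(D₀ s)/η)·√(Δ_μᵀΣ⁻¹Δ_μ). -/

import Mathlib

open MeasureTheory Matrix Real
open scoped ENNReal

noncomputable def vecL1 {d : ℕ} (v : Fin d → ℝ) : ℝ := ∑ i, |v i|
noncomputable def vecL2 {d : ℕ} (v : Fin d → ℝ) : ℝ := Real.sqrt (∑ i, (v i) ^ 2)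
noncomputable def vecLinf {d : ℕ} (v : Fin d → ℝ) : ℝ := ⨆ i, |v i|
noncomputable def matLinf {d : ℕ} (A : Matrix (Fin d) (Fin d) ℝ) : ℝ := ⨆ i, ⨆ j, |A i j|

/-- density of N(m, S) -/
noncomputable def mvGaussian {d : ℕ} (m : Fin d → ℝ) (S : Matrix (Fin d) (Fin d) ℝ) :
    Measure (Fin d → ℝ) :=
  MeasureTheory.volume.withDensity fun x =>
    ENNReal.ofReal (((2 * π) ^ d * S.det) ^ (-(1 : ℝ) / 2) *
      Real.exp (-(1 / 2) * ((x - m) ⬝ᵥ (S⁻¹ *ᵥ (x - m)))))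

/-- joint law of (X, Y) -/
noncomputable def mixtureLaw {d : ℕ} (m1 m2 : Fin d → ℝ) (S : Matrix (Fin d) (Fin d) ℝ) :
    Measure ((Fin d → ℝ) × Fin 2) :=
  ((2 : ℝ≥0∞)⁻¹ • ((mvGaussian m1 S).prod (Measure.dirac 0))) +
  ((2 : ℝ≥0∞)⁻¹ • ((mvGaussian m2 S).prod (Measure.dirac 1)))

noncomputable def overlap {d : ℕ} (P : Measure ((Fin d → ℝ) × Fin 2))
    (ψ : (Fin d → ℝ) → Fin 2) : ℝ :=
  ⨅ pi : Equiv.Perm (Fin 2), (P {p | ψ p.1 ≠ pi p.2}).toReal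

noncomputable def excessErr {d : ℕ} (P : Measure ((Fin d → ℝ) × Fin 2))
    (ψ : (Fin d → ℝ) → Fin 2) : ℝ :=
  overlap P ψ - ⨅ ψ' : {f : (Fin d → ℝ) → Fin 2 // Measurable f}, overlap P ψ'.1

noncomputable def stdNormalPDF (x : ℝ) : ℝ := (Real.sqrt (2 * π))⁻¹ * Real.exp (-(x ^ 2) / 2)
noncomputable def stdNormalCDF (x : ℝ) : ℝ := ∫ u in Set.Iic x, stdNormalPDF u

def RestrictedEigenvalue {d : ℕ} (S : Matrix (Fin d) (Fin d) ℝ) (s : ℕ) (η : ℝ) : Prop :=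
  ∀ T : Finset (Fin d), T.card ≤ s → ∀ v : Fin d → ℝ, v ≠ 0 →
    (∑ i ∈ Tᶜ, |v i|) ≤ (∑ i ∈ T, |v i|) → η * vecL2 v ≤ vecL2 (S *ᵥ v)

/-! On the support `T` of `β`, Cauchy–Schwarz gives `‖β‖₁ ≤ √s ‖β‖₂`. Every vector supported on `T`
lies in the cone of (A3), so `η ‖β‖₂ ≤ ‖Σβ‖₂`. Finally `0 ≤ Σ` and `‖Σ‖₂ ≤ D₀` give
`‖Σβ‖₂² ≤ D₀ βᵀΣβ`, and `Δᵀ Σ⁻¹ Δ = βᵀΣβ`. -/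

section Norms

variable {d : ℕ}

lemma vecL2_nonneg (v : Fin d → ℝ) : 0 ≤ vecL2 v := Real.sqrt_nonneg _

lemma vecL2_sq (v : Fin d → ℝ) : vecL2 v ^ 2 = v ⬝ᵥ v := by
  rw [vecL2, Real.sq_sqrt (by positivity)]
  simp only [dotProduct, sq]

lemma dotProduct_le_vecL2_mul_vecL2 (u v : Fin d → ℝ) : u ⬝ᵥ v ≤ vecL2 u * vecL2 v :=
  Real.sum_mul_le_sqrt_mul_sqrt _ u v

lemma vecL1_le_sqrt_card_mul_vecL2 {v : Fin d → ℝ} {T : Finset (Fin d)}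
    (hv : ∀ i ∉ T, v i = 0) : vecL1 v ≤ √(T.card : ℝ) * vecL2 v := by
  have hsupp : vecL1 v = ∑ i ∈ T, 1 * |v i| := by
    rw [vecL1, ← Finset.sum_subset T.subset_univ fun i _ hi => by simp [hv i hi]]
    simp only [one_mul]
  calc vecL1 v = ∑ i ∈ T, 1 * |v i| := hsupp
    _ ≤ √(∑ i ∈ T, (1 : ℝ) ^ 2) * √(∑ i ∈ T, |v i| ^ 2) := Real.sum_mul_le_sqrt_mul_sqrt _ _ _
    _ ≤ √(T.card : ℝ) * vecL2 v := by
      simp only [one_pow, Finset.sum_const, nsmul_eq_mul, mul_one, sq_abs, vecL2]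
      gcongr
      exact T.subset_univ

end Norms

lemma Matrix.IsSymm.dotProduct_mulVec_eq {n R : Type*} [Fintype n] [CommSemiring R]
    {M : Matrix n n R} (hM : M.IsSymm) (x y : n → R) : x ⬝ᵥ (M *ᵥ y) = (M *ᵥ x) ⬝ᵥ y := by
  rw [dotProduct_mulVec, ← mulVec_transpose, hM.eq]

lemma Matrix.PosSemidef.dotProduct_mulVec_sq_le {n : Type*} [Fintype n]
    {M : Matrix n n ℝ} (hM : M.PosSemidef) (x y : n → ℝ) :
    (x ⬝ᵥ (M *ᵥ y)) ^ 2 ≤ (x ⬝ᵥ (M *ᵥ x)) * (y ⬝ᵥ (M *ᵥ y)) := by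
  classical
  have hsymm : (Matrix.toLinearMap₂' ℝ M).IsSymm := ⟨fun a b => by
    simp only [Matrix.toLinearMap₂'_apply', RingHom.id_apply]
    rw [dotProduct_comm, (isHermitian_iff_isSymm.mp hM.1).dotProduct_mulVec_eq]⟩
  simpa only [Matrix.toLinearMap₂'_apply'] using
    LinearMap.BilinForm.apply_sq_le_of_symm (Matrix.toLinearMap₂' ℝ M)
      (fun v => by
        simpa only [Matrix.toLinearMap₂'_apply', star_trivial] using hM.dotProduct_mulVec_nonneg v)
      hsymm x y

/-- `‖Mx‖⁴ = (xᵀM(Mx))² ≤ (xᵀMx)((Mx)ᵀM(Mx)) ≤ (xᵀMx) D ‖Mx‖²` by Cauchy–Schwarz for the form `M`. -/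
lemma Matrix.PosSemidef.vecL2_mulVec_sq_le {d : ℕ} {M : Matrix (Fin d) (Fin d) ℝ}
    (hM : M.PosSemidef) {D : ℝ} (hD : ∀ v, vecL2 (M *ᵥ v) ≤ D * vecL2 v) (x : Fin d → ℝ) :
    vecL2 (M *ᵥ x) ^ 2 ≤ D * (x ⬝ᵥ (M *ᵥ x)) := by
  set w := M *ᵥ x
  have hq : 0 ≤ x ⬝ᵥ w := by simpa only [star_trivial] using hM.dotProduct_mulVec_nonneg x
  have hw : vecL2 w ^ 2 = x ⬝ᵥ (M *ᵥ w) := by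
    rw [vecL2_sq, (isHermitian_iff_isSymm.mp hM.1).dotProduct_mulVec_eq x w]
  have hwMw : w ⬝ᵥ (M *ᵥ w) ≤ D * vecL2 w ^ 2 :=
    calc w ⬝ᵥ (M *ᵥ w) ≤ vecL2 w * vecL2 (M *ᵥ w) := dotProduct_le_vecL2_mul_vecL2 _ _
      _ ≤ vecL2 w * (D * vecL2 w) := mul_le_mul_of_nonneg_left (hD w) (vecL2_nonneg w)
      _ = D * vecL2 w ^ 2 := by ring
  have hcs : (vecL2 w ^ 2) ^ 2 ≤ (x ⬝ᵥ w) * (D * vecL2 w ^ 2) :=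
    calc (vecL2 w ^ 2) ^ 2 = (x ⬝ᵥ (M *ᵥ w)) ^ 2 := by rw [hw]
      _ ≤ (x ⬝ᵥ w) * (w ⬝ᵥ (M *ᵥ w)) := hM.dotProduct_mulVec_sq_le x w
      _ ≤ (x ⬝ᵥ w) * (D * vecL2 w ^ 2) := mul_le_mul_of_nonneg_left hwMw hq
  rcases (vecL2_nonneg w).eq_or_lt with hzero | hpos
  · have hq0 : x ⬝ᵥ w ≤ 0 := by
      simpa only [← hzero, mul_zero] using dotProduct_le_vecL2_mul_vecL2 x w
    rw [← hzero, le_antisymm hq0 hq]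
    simp
  · refine le_of_mul_le_mul_right ?_ (pow_pos hpos 2)
    linarith [hcs]

lemma RestrictedEigenvalue.mul_vecL2_le_of_support {d s : ℕ} {M : Matrix (Fin d) (Fin d) ℝ}
    {η : ℝ} (hRE : RestrictedEigenvalue M s η) {T : Finset (Fin d)} (hT : T.card ≤ s)
    {v : Fin d → ℝ} (hv : ∀ i ∉ T, v i = 0) : η * vecL2 v ≤ vecL2 (M *ᵥ v) := by
  by_cases hv0 : v = 0
  · simp [hv0, vecL2]
  refine hRE T hT v hv0 ?_
  rw [Finset.sum_eq_zero fun i hi => by rw [hv i (Finset.mem_compl.mp hi), abs_zero]]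
  positivity

theorem l1_bound_via_RE_general {d : ℕ}
    (Sig : Matrix (Fin d) (Fin d) ℝ) (hSig : Sig.PosDef)
    (s : ℕ) (η D0 : ℝ) (hη : 0 < η)
    -- spectral norm bound ‖Σ‖₂ ≤ D₀
    (hspec : ∀ v : Fin d → ℝ, vecL2 (Sig *ᵥ v) ≤ D0 * vecL2 v)
    (β : Fin d → ℝ)
    -- β is supported on a set of at most s coordinates
    (hsupp : Set.ncard {i | β i ≠ 0} ≤ s)
    -- (A3) restricted eigenvalue property with constants (s, η)
    (hRE : RestrictedEigenvalue Sig s η)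
    (Δ : Fin d → ℝ) (hΔ : Δ = Sig *ᵥ β) :
    vecL1 β ≤ Real.sqrt (D0 * s) / η * Real.sqrt (β ⬝ᵥ (Sig *ᵥ β)) ∧
    vecL1 β ≤ Real.sqrt (D0 * s) / η * Real.sqrt (Δ ⬝ᵥ (Sig⁻¹ *ᵥ Δ)) := by
  classical
  set T := Finset.univ.filter (β · ≠ 0)
  have hT : T.card ≤ s := by rwa [← Set.ncard_coe_finset, Finset.coe_filter_univ]
  have hβT : ∀ i ∉ T, β i = 0 := by simp [T]
  have hq : 0 ≤ β ⬝ᵥ (Sig *ᵥ β) := by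
    simpa only [star_trivial] using hSig.posSemidef.dotProduct_mulVec_nonneg β
  have hquad : Δ ⬝ᵥ (Sig⁻¹ *ᵥ Δ) = β ⬝ᵥ (Sig *ᵥ β) := by
    rw [hΔ, mulVec_mulVec, nonsing_inv_mul _ (isUnit_iff_ne_zero.mpr hSig.det_pos.ne'),
      one_mulVec, dotProduct_comm]
  have hbound : vecL1 β ≤ √(D0 * s) / η * √(β ⬝ᵥ (Sig *ᵥ β)) :=
    calc vecL1 β ≤ √(s : ℝ) * vecL2 β :=
          (vecL1_le_sqrt_card_mul_vecL2 hβT).trans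
            (mul_le_mul_of_nonneg_right (by gcongr) (vecL2_nonneg β))
      _ ≤ √(s : ℝ) * (vecL2 (Sig *ᵥ β) / η) := by
          gcongr
          rw [le_div_iff₀ hη, mul_comm]
          exact hRE.mul_vecL2_le_of_support hT hβT
      _ ≤ √(s : ℝ) * (√(D0 * (β ⬝ᵥ (Sig *ᵥ β))) / η) := by
          gcongr
          exact Real.le_sqrt_of_sq_le (hSig.posSemidef.vecL2_mulVec_sq_le hspec β)
      _ = √(D0 * s) / η * √(β ⬝ᵥ (Sig *ᵥ β)) := by
          rw [Real.sqrt_mul' _ hq, Real.sqrt_mul' _ (Nat.cast_nonneg s)]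
          ring
  exact ⟨hbound, hquad ▸ hbound⟩

/-- ℓ1-norm bound via the restricted eigenvalue property and spectral norm:
‖β‖₁ ≤ (√(D₀s)/η)·√(βᵀΣβ) = (√(D₀s)/η)·√(Δ_μᵀΣ⁻¹Δ_μ) with Δ_μ = Σβ. -/
theorem l1_bound_via_RE {d : ℕ}
    (Sig : Matrix (Fin d) (Fin d) ℝ) (hSig : Sig.PosDef)
    (s : ℕ) (η D0 : ℝ) (hη : 0 < η) (hD0 : 0 ≤ D0)
    -- spectral norm bound ‖Σ‖₂ ≤ D₀
    (hspec : ∀ v : Fin d → ℝ, vecL2 (Sig *ᵥ v) ≤ D0 * vecL2 v)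
    (β : Fin d → ℝ)
    -- β is supported on a set of at most s coordinates
    (hsupp : Set.ncard {i | β i ≠ 0} ≤ s)
    -- (A3) restricted eigenvalue property with constants (s, η)
    (hRE : RestrictedEigenvalue Sig s η)
    (Δ : Fin d → ℝ) (hΔ : Δ = Sig *ᵥ β) :
    vecL1 β ≤ Real.sqrt (D0 * s) / η * Real.sqrt (β ⬝ᵥ (Sig *ᵥ β)) ∧
    vecL1 β ≤ Real.sqrt (D0 * s) / η * Real.sqrt (Δ ⬝ᵥ (Sig⁻¹ *ᵥ Δ)) :=
  l1_bound_via_RE_general Sig hSig s η D0 hη hspec β hsupp hRE Δ hΔ
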